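/- arXiv:2202.00643 — 2 statements merged into one kernel-verified Lean document; each statement's English description precedes it below -/
import Mathlib

section
/- Let v be a recurrent right-infinite word and S₁, …, S_k factor-closed sets of finite words with Fac(v) ⊆ S₁ ∪ ⋯ ∪ S_k. Then Fac(v) ⊆ S_i for some i. -/
/-- The factor of `w` of length `n` starting at position `i`. -/
def factorAt {A : Type*} (w : ℕ → A) (i n : ℕ) : List A :=
  (List.range n).map (fun k => w (i + k))

/-- `u` is a (finite, contiguous) factor of the right-infinite word `w`. -/
def IsFactorOf {A : Type*} (u : List A) (w : ℕ → A) : Prop :=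
  ∃ i, u = factorAt w i u.length

/-- The set of factors of `w`. -/
def Fac {A : Type*} (w : ℕ → A) : Set (List A) := {u | IsFactorOf u w}

/-- `w` is recurrent: every factor occurs at arbitrarily large positions. -/
def Recurrent {A : Type*} (w : ℕ → A) : Prop :=
  ∀ u ∈ Fac w, ∀ N : ℕ, ∃ i ≥ N, u = factorAt w i u.length

/-- `w` is uniformly recurrent: each factor occurs in every sufficiently long factor. -/
def UniformlyRecurrent {A : Type*} (w : ℕ → A) : Prop :=
  ∀ u ∈ Fac w, ∃ N : ℕ, ∀ y ∈ Fac w, y.length = N → u <:+: y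

/-- `w` is (purely) periodic. -/
def PeriodicWord {A : Type*} (w : ℕ → A) : Prop :=
  ∃ p ≥ 1, ∀ n, w (n + p) = w n

/-- `w` is eventually periodic. -/
def EventuallyPeriodicWord {A : Type*} (w : ℕ → A) : Prop :=
  ∃ p ≥ 1, ∃ N, ∀ n ≥ N, w (n + p) = w n

/-- The factor complexity function of `w`. -/
noncomputable def cplx {A : Type*} (w : ℕ → A) (n : ℕ) : ℕ :=
  Set.ncard {u | u ∈ Fac w ∧ u.length = n}

/-- A set of finite words is factor-closed. -/
def FactorClosed {A : Type*} (S : Set (List A)) : Prop :=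
  ∀ y ∈ S, ∀ u, u <:+: y → u ∈ S

/-- The radical of `w`. -/
def Rad {A : Type*} (w : ℕ → A) : Set (List A) :=
  {z | z ∈ Fac w ∧ ∀ Y : Finset (List A),
    (∀ y ∈ Y, y ∈ Fac w ∧ z <:+: y) →
    ∃ N : ℕ, ∀ L : List (List A), L.length = N → (∀ y ∈ L, y ∈ Y) →
      L.flatten ∉ Fac w}

/-- The recurrent spectrum of `w`, with classes identified with their factor sets. -/
def RecSpec {A : Type*} (w : ℕ → A) : Set (Set (List A)) :=
  {F | ∃ v : ℕ → A, Recurrent v ∧ F = Fac v ∧ Fac v ⊆ Fac w}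

lemma factorAt_length {A : Type*} (w : ℕ → A) (i n : ℕ) :
    (factorAt w i n).length = n := by simp [factorAt]

lemma factorAt_append {A : Type*} (w : ℕ → A) (i m n : ℕ) :
    factorAt w i (m + n) = factorAt w i m ++ factorAt w (i + m) n := by
  simp [factorAt, List.range_add, Function.comp, add_assoc]

theorem recurrent_factors_subset_of_union {A : Type*} (v : ℕ → A)
    (hv : Recurrent v) (k : ℕ) (S : Fin k → Set (List A))
    (hS : ∀ i, FactorClosed (S i)) (h : Fac v ⊆ ⋃ i, S i) :
    ∃ i, Fac v ⊆ S i := by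
  by_contra hcon
  push_neg at hcon
  simp only [Set.not_subset] at hcon
  choose u hu hnot using hcon
  simp only [Fac, IsFactorOf, Set.mem_setOf_eq] at hu
  choose p hp using hu
  -- position + length bound
  set M : ℕ := Finset.univ.sup (fun j : Fin k => p j + (u j).length) with hM
  have hbig : factorAt v 0 M ∈ Fac v := ⟨0, by simp [factorAt_length]⟩
  obtain ⟨_, ⟨j, rfl⟩, hj⟩ := h hbig
  have hle : p j + (u j).length ≤ M :=
    hM ▸ Finset.le_sup (f := fun j : Fin k => p j + (u j).length) (Finset.mem_univ j)
  have hinf : u j <:+: factorAt v 0 M := by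
    have h1 : factorAt v 0 M =
        factorAt v 0 (p j) ++ factorAt v (p j) (u j).length ++
          factorAt v (p j + (u j).length) (M - (p j + (u j).length)) := by
      have h2 : M = p j + (u j).length + (M - (p j + (u j).length)) :=
        (Nat.add_sub_cancel' hle).symm
      conv_lhs => rw [h2]
      rw [factorAt_append, factorAt_append, Nat.zero_add, Nat.zero_add]
    rw [h1, ← hp j]
    exact ⟨factorAt v 0 (p j),
      factorAt v (p j + (u j).length) (M - (p j + (u j).length)), rfl⟩
  exact hnot j (hS j _ hj _ hinf)
end

section
/- Let w be a recurrent right-infinite word of linear factor complexity, and let v be a recurrent word with Fac(v) ⊊ Fac(w). Then limsup_{n→∞} p_v(n)/n ≤ (limsup_{n→∞} p_w(n)/n) − 1. -/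
/-!
Pick `u ∈ Fac w \ Fac v`. For each `n`, `u` must occur in `w` at some `i ≥ n` with no occurrence
in `[i - n, i)`: otherwise, by recurrence of `w`, every factor of `w` of length `n + |u|` would
contain `u`, and so would the prefixes of `v`. The `n + 1 - |u|` windows of length `n` covering
that occurrence are distinct factors of `w` that are not factors of `v`, whence
`p_v(n) + n + 1 ≤ p_w(n) + |u|`. Dividing by `n` and passing to the limsup gives the drop by `1`;
linear complexity of `w` makes both limsups finite.
-/

open Filter Topology

def OccursAt {A : Type*} (u : List A) (w : ℕ → A) (i : ℕ) : Prop :=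
  u = factorAt w i u.length

section Occurrences

variable {A : Type*} {w : ℕ → A} {u : List A}

@[simp]
lemma length_factorAt (i n : ℕ) : (factorAt w i n).length = n := by
  simp [factorAt]

lemma factorAt_mem_Fac (i n : ℕ) : factorAt w i n ∈ Fac w :=
  ⟨i, by rw [length_factorAt]⟩

lemma take_drop_factorAt {i j k n : ℕ} (h : j + k ≤ n) :
    ((factorAt w i n).drop j).take k = factorAt w (i + j) k := by
  apply List.ext_getElem
  · simp only [List.length_take, List.length_drop, length_factorAt]
    omega
  · intro l _ _
    simp [factorAt, Nat.add_assoc]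

lemma factorAt_infix_factorAt {i j k n : ℕ} (h : j + k ≤ n) :
    factorAt w (i + j) k <:+: factorAt w i n := by
  rw [← take_drop_factorAt h]
  exact (List.take_prefix _ _).isInfix.trans (List.drop_suffix _ _).isInfix

lemma exists_occursAt_of_infix_factorAt {i n : ℕ} (h : u <:+: factorAt w i n) :
    ∃ j, j + u.length ≤ n ∧ OccursAt u w (i + j) := by
  obtain ⟨s, t, hst⟩ := h
  have hlen : s.length + (u.length + t.length) = n := by
    simpa using congrArg List.length hst
  refine ⟨s.length, by omega, ?_⟩
  rw [OccursAt, ← take_drop_factorAt (n := n) (by omega), ← hst, List.append_assoc, List.drop_left,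
    List.take_left]

lemma factorClosed_Fac : FactorClosed (Fac w) := by
  rintro x ⟨i, hx⟩ u hu
  rw [hx] at hu
  obtain ⟨j, -, hj⟩ := exists_occursAt_of_infix_factorAt hu
  exact ⟨i + j, hj⟩

lemma finite_factors_length_eq [Finite A] (n : ℕ) : {x | x ∈ Fac w ∧ x.length = n}.Finite :=
  (List.finite_length_eq A n).subset fun _ hx => hx.2

/-- The windows `factorAt w (i - j) n`, `j ≤ n - |u|`, all contain the occurrence of `u` at `i`;
they are pairwise distinct since the first occurrence of `u` in window `j` is at offset `j`. -/
lemma le_ncard_factors_containing [Finite A] {i n : ℕ} (hn : n ≤ i) (hi : OccursAt u w i)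
    (hfree : ∀ t, i - n ≤ t → t < i → ¬ OccursAt u w t) :
    n + 1 - u.length ≤ {x | (x ∈ Fac w ∧ x.length = n) ∧ u <:+: x}.ncard := by
  have hwindow : ∀ j, j + u.length ≤ n → factorAt w (i - j + j) u.length = u := by
    intro j hj
    rw [Nat.sub_add_cancel (by omega), ← hi]
  have hmaps : ∀ j ∈ Set.Iio (n + 1 - u.length),
      factorAt w (i - j) n ∈ {x | (x ∈ Fac w ∧ x.length = n) ∧ u <:+: x} := by
    intro j hj
    rw [Set.mem_Iio] at hj
    refine ⟨⟨factorAt_mem_Fac _ _, length_factorAt _ _⟩, ?_⟩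
    rw [← hwindow j (by omega)]
    exact factorAt_infix_factorAt (by omega)
  have hdistinct : ∀ j j', j < j' → j' < n + 1 - u.length →
      factorAt w (i - j) n ≠ factorAt w (i - j') n := by
    intro j j' hjj' hj' heq
    have hu : u = factorAt w (i - j' + j) u.length := by
      rw [← take_drop_factorAt (n := n) (by omega), ← heq, take_drop_factorAt (by omega),
        hwindow j (by omega)]
    exact hfree _ (by omega) (by omega) hu
  have hinj : Set.InjOn (fun j => factorAt w (i - j) n) (Set.Iio (n + 1 - u.length)) := by
    intro j hj j' hj' heq
    simp only [Set.mem_Iio] at hj hj'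
    rcases lt_trichotomy j j' with h | h | h
    · exact absurd heq (hdistinct j j' h hj')
    · exact h
    · exact absurd heq.symm (hdistinct j' j h hj)
  simpa using Set.ncard_le_ncard_of_injOn _ hmaps hinj
    ((finite_factors_length_eq n).subset fun _ hx => hx.1)

lemma cplx_add_ncard_factors_containing_le [Finite A] {v : ℕ → A} (hvw : Fac v ⊆ Fac w)
    (huv : u ∉ Fac v) (n : ℕ) :
    cplx v n + {x | (x ∈ Fac w ∧ x.length = n) ∧ u <:+: x}.ncard ≤ cplx w n := by
  have hdisj : Disjoint {x | x ∈ Fac v ∧ x.length = n}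
      {x | (x ∈ Fac w ∧ x.length = n) ∧ u <:+: x} :=
    Set.disjoint_left.2 fun x hxv hxu => huv (factorClosed_Fac x hxv.1 u hxu.2)
  have hsub : {x | x ∈ Fac v ∧ x.length = n} ∪ {x | (x ∈ Fac w ∧ x.length = n) ∧ u <:+: x} ⊆
      {x | x ∈ Fac w ∧ x.length = n} :=
    Set.union_subset (fun x hx => ⟨hvw hx.1, hx.2⟩) fun x hx => hx.1
  rw [cplx, cplx, ← Set.ncard_union_eq hdisj (finite_factors_length_eq n)
    ((finite_factors_length_eq n).subset fun _ hx => hx.1)]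
  exact Set.ncard_le_ncard hsub (finite_factors_length_eq n)

lemma exists_occursAt_mem_Icc_of_gaps_le {g : ℕ}
    (hgap : ∀ i ≥ g, OccursAt u w i → ∃ t, i - g ≤ t ∧ t < i ∧ OccursAt u w t) :
    ∀ i, OccursAt u w i → ∀ s, s + g ≤ i → ∃ t, s ≤ t ∧ t ≤ s + g ∧ OccursAt u w t := by
  intro i
  induction i using Nat.strong_induction_on with
  | _ i ih =>
    intro hi s hs
    obtain ⟨t, hti, hti', ht⟩ := hgap i (by omega) hi
    by_cases hts : t ≤ s + g
    · exact ⟨t, by omega, hts, ht⟩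
    · exact ih t hti' ht s (by omega)

lemma infix_of_gaps_le (hw : Recurrent w) (huw : u ∈ Fac w) {g : ℕ}
    (hgap : ∀ i ≥ g, OccursAt u w i → ∃ t, i - g ≤ t ∧ t < i ∧ OccursAt u w t)
    {x : List A} (hx : x ∈ Fac w) (hlen : x.length = g + u.length) : u <:+: x := by
  obtain ⟨s, hs⟩ := hx
  obtain ⟨i, hsi, hi⟩ := hw u huw (s + g)
  obtain ⟨t, hst, hts, ht⟩ := exists_occursAt_mem_Icc_of_gaps_le hgap i hi s hsi
  have hinfix : factorAt w (s + (t - s)) u.length <:+: factorAt w s (g + u.length) :=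
    factorAt_infix_factorAt (by omega)
  rwa [Nat.add_sub_cancel' hst, ← ht, ← hlen, ← hs] at hinfix

lemma exists_isolated_occursAt {v : ℕ → A} (hw : Recurrent w) (hvw : Fac v ⊆ Fac w)
    (huw : u ∈ Fac w) (huv : u ∉ Fac v) (n : ℕ) :
    ∃ i ≥ n, OccursAt u w i ∧ ∀ t, i - n ≤ t → t < i → ¬ OccursAt u w t := by
  by_contra! hgap
  have hprefix := factorAt_mem_Fac (w := v) 0 (n + u.length)
  exact huv (factorClosed_Fac _ hprefix u
    (infix_of_gaps_le hw huw hgap (hvw hprefix) (length_factorAt _ _)))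

theorem cplx_add_le_cplx_add_length [Finite A] {v : ℕ → A} (hw : Recurrent w)
    (hvw : Fac v ⊆ Fac w) (huw : u ∈ Fac w) (huv : u ∉ Fac v) (n : ℕ) :
    cplx v n + n + 1 ≤ cplx w n + u.length := by
  obtain ⟨i, hni, hi, hfree⟩ := exists_isolated_occursAt hw hvw huw huv n
  have := le_ncard_factors_containing hni hi hfree
  have := cplx_add_ncard_factors_containing_le hvw huv n
  omega

end Occurrences

lemma limsup_le_limsup_sub_of_eventually_add_le {ι : Type*} {l : Filter ι} [l.NeBot]
    {a b d : ι → ℝ} {c : ℝ} (ha : IsBoundedUnder (· ≥ ·) l a) (hb : IsBoundedUnder (· ≤ ·) l b)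
    (hd : Tendsto d l (𝓝 c)) (h : ∀ᶠ i in l, a i + d i ≤ b i) :
    limsup a l ≤ limsup b l - c := by
  have ha' : IsBoundedUnder (· ≤ ·) l a := by
    obtain ⟨B, hB⟩ := hb
    obtain ⟨D, hD⟩ := hd.isBoundedUnder_ge
    refine ⟨B - D, eventually_map.2 ?_⟩
    filter_upwards [h, eventually_map.1 hB, eventually_map.1 hD] with i hi hBi hDi
    linarith
  have hsum := le_limsup_add ha' ha.isCoboundedUnder_le hd.isBoundedUnder_le hd.isBoundedUnder_ge
  have hle : limsup (a + d) l ≤ limsup b l :=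
    limsup_le_limsup h (isBoundedUnder_ge_add ha hd.isBoundedUnder_ge).isCoboundedUnder_le hb
  rw [hd.liminf_eq] at hsum
  linarith

theorem limsup_complexity_drop_general {A : Type*} [Finite A] (w v : ℕ → A)
    (hw : Recurrent w) (hlin : ∃ C : ℕ, ∀ n ≥ 1, cplx w n ≤ C * n)
    (hsub : Fac v ⊂ Fac w) :
    Filter.atTop.limsup (fun n : ℕ => (cplx v n : ℝ) / n) ≤
      Filter.atTop.limsup (fun n : ℕ => (cplx w n : ℝ) / n) - 1 := by
  obtain ⟨u, huw, huv⟩ := Set.exists_of_ssubset hsub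
  obtain ⟨C, hC⟩ := hlin
  have hbdd : IsBoundedUnder (· ≤ ·) atTop fun n : ℕ => (cplx w n : ℝ) / n := by
    refine ⟨C, eventually_map.2 <| (eventually_ge_atTop 1).mono fun n (hn : 1 ≤ n) => ?_⟩
    change (cplx w n : ℝ) / n ≤ C
    rw [div_le_iff₀ (Nat.cast_pos.2 hn)]
    exact_mod_cast hC n hn
  have hd : Tendsto (fun n : ℕ => 1 - (u.length : ℝ) / n) atTop (𝓝 1) := by
    simpa using tendsto_const_nhds.sub (tendsto_const_div_atTop_nhds_zero_nat (u.length : ℝ))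
  refine limsup_le_limsup_sub_of_eventually_add_le (isBoundedUnder_of_eventually_ge
    (Eventually.of_forall fun n => by positivity)) hbdd hd ?_
  filter_upwards [eventually_gt_atTop 0] with n hn
  have hcount : (cplx v n : ℝ) + n + 1 ≤ cplx w n + u.length :=
    mod_cast cplx_add_le_cplx_add_length hw hsub.1 huw huv n
  have hn' : (0 : ℝ) < n := Nat.cast_pos.2 hn
  field_simp
  linarith

theorem limsup_complexity_drop {A : Type*} [Finite A] (w v : ℕ → A)
    (hw : Recurrent w) (hlin : ∃ C : ℕ, ∀ n ≥ 1, cplx w n ≤ C * n)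
    (hv : Recurrent v) (hsub : Fac v ⊂ Fac w) :
    Filter.atTop.limsup (fun n : ℕ => (cplx v n : ℝ) / n) ≤
      Filter.atTop.limsup (fun n : ℕ => (cplx w n : ℝ) / n) - 1 :=
  limsup_complexity_drop_general w v hw hlin hsub
end
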